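/- Let f : K^{•,•} → L^{•,•} be a morphism of first-quadrant double complexes (with anti-commuting differentials). If for every p ≥ 0 the induced morphism of row complexes f^{p,•} : K^{p,•} → L^{p,•} induces an isomorphism in cohomology, then the induced morphism of total complexes Tf : T_K^• → T_L^• induces an isomorphism in cohomology. -/

import Mathlib

/-!
Injectivity and surjectivity of `Tf` in cohomology both say that cocycles of the mapping cone
of `Tf` are coboundaries: take the cocycles `(y, z)` with `f y = ∂z`, resp. `(0, x)` with
`∂x = 0`. The cone of `Tf` is the total complex of the double complex whose rows are the cones
of the row maps `f^{p,•}`, and these are exact. So a cone cocycle that vanishes in the columns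
`< k` is, in column `k`, a row cocycle, hence the row coboundary of some `c'` in column `k`;
subtracting the total coboundary of `c'` makes it vanish in the columns `≤ k`. In total degree
`n` only the columns `≤ n` are nonzero, so `n + 1` such steps exhaust the cocycle.
-/

namespace DoubleComplexComparison

variable {R : Type*} [Ring R]

/-- The total differential `∂ = d + δ` of a (first-quadrant, anti-commutative) double
complex, acting on elements of the total complex realised inside the full product. -/
def totD {K : ℕ → ℕ → Type*} [∀ p q, AddCommGroup (K p q)] [∀ p q, Module R (K p q)]
    (d : ∀ p q, K p q →ₗ[R] K p (q + 1)) (δ : ∀ p q, K p q →ₗ[R] K (p + 1) q)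
    (f : ∀ p q, K p q) : ∀ p q, K p q := fun p q =>
  (match (motive := ∀ q, K p q) q with
    | 0 => (0 : K p 0)
    | Nat.succ q' => d p q' (f p q')) +
  (match (motive := ∀ p, K p q) p with
    | 0 => (0 : K 0 q)
    | Nat.succ p' => δ p' q (f p' q))

section Row

variable {C D : ℕ → Type*} [∀ q, AddCommGroup (C q)] [∀ q, Module R (C q)]
  [∀ q, AddCommGroup (D q)] [∀ q, Module R (D q)]

def rowD (d : ∀ q, C q →ₗ[R] C (q + 1)) (c : ∀ q, C q) : ∀ q, C q
  | 0 => 0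
  | q + 1 => d q (c q)

@[simp]
theorem rowD_apply_zero (d : ∀ q, C q →ₗ[R] C (q + 1)) (c : ∀ q, C q) : rowD d c 0 = 0 := rfl

@[simp]
theorem rowD_apply_succ (d : ∀ q, C q →ₗ[R] C (q + 1)) (c : ∀ q, C q) (q : ℕ) :
    rowD d c (q + 1) = d q (c q) := rfl

@[simp]
theorem rowD_zero (d : ∀ q, C q →ₗ[R] C (q + 1)) : rowD d (0 : ∀ q, C q) = 0 := by
  funext q
  cases q <;> simp

/-- `c` is concentrated in degree `n - j`, and vanishes identically when `j > n`. -/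
def HasDegree (j n : ℕ) (c : ∀ q, C q) : Prop :=
  ∀ q, q + j ≠ n → c q = 0

theorem hasDegree_single {j n q : ℕ} (h : q + j = n) (v : C q) : HasDegree j n (Pi.single q v) :=
  fun _ hb => Pi.single_eq_of_ne (by omega) v

theorem HasDegree.rowD {j n : ℕ} {c : ∀ q, C q} (hc : HasDegree (j + 1) n c)
    (d : ∀ q, C q →ₗ[R] C (q + 1)) : HasDegree j n (rowD d c) := by
  rintro (_ | q) hq
  · rfl
  · rw [rowD_apply_succ, hc q (by omega), map_zero]

structure IsQuasiIso (dC : ∀ q, C q →ₗ[R] C (q + 1)) (dD : ∀ q, D q →ₗ[R] D (q + 1))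
    (g : ∀ q, C q →ₗ[R] D q) : Prop where
  surj_zero : ∀ x : D 0, dD 0 x = 0 → ∃ y : C 0, dC 0 y = 0 ∧ g 0 y = x
  surj_succ : ∀ q (x : D (q + 1)), dD (q + 1) x = 0 →
    ∃ y : C (q + 1), dC (q + 1) y = 0 ∧ ∃ z : D q, g (q + 1) y = x + dD q z
  inj_zero : ∀ y : C 0, dC 0 y = 0 → g 0 y = 0 → y = 0
  inj_succ : ∀ q (y : C (q + 1)), dC (q + 1) y = 0 →
    (∃ z : D q, g (q + 1) y = dD q z) → ∃ w : C q, dC q w = y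

namespace IsQuasiIso

variable {dC : ∀ q, C q →ₗ[R] C (q + 1)} {dD : ∀ q, D q →ₗ[R] D (q + 1)}
  {g : ∀ q, C q →ₗ[R] D q}

theorem exists_cocycle_map_eq_add_rowD (hg : IsQuasiIso dC dD g) {q : ℕ} {e : D q}
    (he : dD q e = 0) :
    ∃ u : C q, dC q u = 0 ∧ ∃ z, HasDegree 1 q z ∧ g q u = e + rowD dD z q := by
  cases q with
  | zero =>
    obtain ⟨u, hu, hgu⟩ := hg.surj_zero e he
    exact ⟨u, hu, 0, fun _ _ => rfl, by rw [hgu, rowD_apply_zero, add_zero]⟩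
  | succ q =>
    obtain ⟨u, hu, z, hgu⟩ := hg.surj_succ q e he
    exact ⟨u, hu, Pi.single q z, hasDegree_single rfl z, by simpa using hgu⟩

theorem cone_exact (hg : IsQuasiIso dC dD g)
    (hcomm : ∀ q (x : C q), g (q + 1) (dC q x) = dD q (g q x)) {m : ℕ} {y : ∀ q, C q}
    {x : ∀ q, D q} (hy : HasDegree 0 m y) (hx : HasDegree 1 m x) (hdy : ∀ q, rowD dC y q = 0)
    (hgy : ∀ q, g q (y q) = rowD dD x q) :
    ∃ w z, HasDegree 1 m w ∧ HasDegree 2 m z ∧ (∀ q, rowD dC w q = y q) ∧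
      ∀ q, g q (w q) = x q + rowD dD z q := by
  cases m with
  | zero =>
    have hy0 : y = 0 := by
      funext q
      rcases q with _ | q
      · exact hg.inj_zero (y 0) (hdy 1) (hgy 0)
      · exact hy (q + 1) (by omega)
    have hx0 : x = 0 := funext fun q => hx q (by omega)
    subst hy0 hx0
    exact ⟨0, 0, fun _ _ => rfl, fun _ _ => rfl, by simp, by simp⟩
  | succ m =>
    obtain ⟨w₀, hw₀⟩ := hg.inj_succ m (y (m + 1)) (hdy (m + 2)) ⟨x m, hgy (m + 1)⟩
    have hcocycle : dD m (x m - g m w₀) = 0 := by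
      rw [map_sub, ← hcomm, hw₀, ← rowD_apply_succ, ← hgy, sub_self]
    obtain ⟨u, hu, z, hz, hgu⟩ := hg.exists_cocycle_map_eq_add_rowD hcocycle
    refine ⟨Pi.single m (w₀ + u), z, hasDegree_single rfl _, fun q hq => hz q (by omega),
      fun q => ?_, fun q => ?_⟩
    · rcases q with _ | q
      · exact (hy 0 (by omega)).symm
      · by_cases hq : q = m
        · subst hq
          simp [hw₀, hu]
        · simp [Pi.single_eq_of_ne hq, hy (q + 1) (by omega)]
    · by_cases hq : q = m
      · subst hq
        rw [Pi.single_eq_same, map_add, hgu]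
        abel
      · simp [Pi.single_eq_of_ne hq, hx q (by omega), hz.rowD dD q (by omega)]

end IsQuasiIso

end Row

section Total

variable {K : ℕ → ℕ → Type*} [∀ p q, AddCommGroup (K p q)] [∀ p q, Module R (K p q)]

structure IsDoubleComplex (d : ∀ p q, K p q →ₗ[R] K p (q + 1))
    (δ : ∀ p q, K p q →ₗ[R] K (p + 1) q) : Prop where
  d_d : ∀ p q (x : K p q), d p (q + 1) (d p q x) = 0
  δ_δ : ∀ p q (x : K p q), δ (p + 1) q (δ p q x) = 0
  d_δ_add_δ_d : ∀ p q (x : K p q), d (p + 1) q (δ p q x) + δ p (q + 1) (d p q x) = 0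

/-- `g` lies in total degree `n - j`, and vanishes identically when `j > n`. -/
def HasTotalDegree (j n : ℕ) (g : ∀ p q, K p q) : Prop :=
  ∀ p q, p + q + j ≠ n → g p q = 0

namespace HasTotalDegree

variable {j n : ℕ} {g g' : ∀ p q, K p q}

theorem add (hg : HasTotalDegree j n g) (hg' : HasTotalDegree j n g') :
    HasTotalDegree j n (g + g') :=
  fun p q h => by simp [hg p q h, hg' p q h]

theorem sub (hg : HasTotalDegree j n g) (hg' : HasTotalDegree j n g') :
    HasTotalDegree j n (g - g') :=
  fun p q h => by simp [hg p q h, hg' p q h]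

theorem succ_succ (hg : HasTotalDegree j n g) : HasTotalDegree (j + 1) (n + 1) g :=
  fun p q h => hg p q (by omega)

theorem of_succ_succ (hg : HasTotalDegree (j + 1) (n + 1) g) : HasTotalDegree j n g :=
  fun p q h => hg p q (by omega)

theorem eq_zero_of_forall_lt_succ (hg : HasTotalDegree j n g) (hcol : ∀ p < n + 1, g p = 0) :
    g = 0 := by
  funext p q
  by_cases hp : p < n + 1
  · exact congrFun (hcol p hp) q
  · exact hg p q (by omega)

end HasTotalDegree

theorem hasTotalDegree_single {j n k : ℕ} {w : ∀ q, K k q} (hw : HasDegree (j + 1) (n - k) w) :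
    HasTotalDegree (j + 1) n (Pi.single k w) := by
  intro p q h
  by_cases hp : p = k
  · subst hp
    simp [hw q (by omega)]
  · simp [hp]

variable (d : ∀ p q, K p q →ₗ[R] K p (q + 1)) (δ : ∀ p q, K p q →ₗ[R] K (p + 1) q)

theorem totD_add (g g' : ∀ p q, K p q) : totD d δ (g + g') = totD d δ g + totD d δ g' := by
  funext p q
  rcases p with _ | p <;> rcases q with _ | q <;> simp [totD, add_add_add_comm]

theorem totD_zero : totD d δ (0 : ∀ p q, K p q) = 0 :=
  (AddMonoidHom.mk' (totD d δ) (totD_add d δ)).map_zero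

theorem totD_sub (g g' : ∀ p q, K p q) : totD d δ (g - g') = totD d δ g - totD d δ g' :=
  (AddMonoidHom.mk' (totD d δ) (totD_add d δ)).map_sub g g'

theorem totD_apply_eq_rowD {g : ∀ p q, K p q} {p : ℕ} (hg : ∀ p', p = p' + 1 → g p' = 0) :
    totD d δ g p = rowD (d p) (g p) := by
  funext q
  rcases p with _ | p <;> rcases q with _ | q <;> simp [totD, hg]

theorem HasTotalDegree.totD {j n : ℕ} {g : ∀ p q, K p q} (hg : HasTotalDegree (j + 1) n g) :
    HasTotalDegree j n (totD d δ g) := by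
  intro p q h
  rcases p with _ | p <;> rcases q with _ | q
  · simp [DoubleComplexComparison.totD]
  · simp [DoubleComplexComparison.totD, hg 0 q (by omega)]
  · simp [DoubleComplexComparison.totD, hg p 0 (by omega)]
  · simp [DoubleComplexComparison.totD, hg p (q + 1) (by omega), hg (p + 1) q (by omega)]

variable {d δ}

theorem IsDoubleComplex.totD_totD (hK : IsDoubleComplex d δ) (g : ∀ p q, K p q) :
    totD d δ (totD d δ g) = 0 := by
  funext p q
  rcases p with _ | _ | p <;> rcases q with _ | _ | q <;>
    simp [totD, hK.d_d, hK.δ_δ, hK.d_δ_add_δ_d]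

end Total

section Cone

variable {K L : ℕ → ℕ → Type*} [∀ p q, AddCommGroup (K p q)] [∀ p q, Module R (K p q)]
  [∀ p q, AddCommGroup (L p q)] [∀ p q, Module R (L p q)]

structure IsDoubleComplexHom (dK : ∀ p q, K p q →ₗ[R] K p (q + 1))
    (δK : ∀ p q, K p q →ₗ[R] K (p + 1) q) (dL : ∀ p q, L p q →ₗ[R] L p (q + 1))
    (δL : ∀ p q, L p q →ₗ[R] L (p + 1) q) (f : ∀ p q, K p q →ₗ[R] L p q) : Prop where
  comm_d : ∀ p q (x : K p q), f p (q + 1) (dK p q x) = dL p q (f p q x)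
  comm_δ : ∀ p q (x : K p q), f (p + 1) q (δK p q x) = δL p q (f p q x)

theorem HasTotalDegree.map {j n : ℕ} {g : ∀ p q, K p q} (hg : HasTotalDegree j n g)
    (f : ∀ p q, K p q →ₗ[R] L p q) : HasTotalDegree j n (fun p q => f p q (g p q)) :=
  fun p q h => by simp [hg p q h]

variable (dK : ∀ p q, K p q →ₗ[R] K p (q + 1)) (δK : ∀ p q, K p q →ₗ[R] K (p + 1) q)
  (dL : ∀ p q, L p q →ₗ[R] L p (q + 1)) (δL : ∀ p q, L p q →ₗ[R] L (p + 1) q)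
  (f : ∀ p q, K p q →ₗ[R] L p q)

def coneD : (∀ p q, K p q) × (∀ p q, L p q) →+ (∀ p q, K p q) × (∀ p q, L p q) :=
  AddMonoidHom.mk' (fun c => (totD dK δK c.1, (fun p q => f p q (c.1 p q)) - totD dL δL c.2))
    fun c c' => by
      ext1
      · exact totD_add dK δK c.1 c'.1
      · funext p q
        simp [totD_add]
        abel

@[simp]
theorem coneD_fst (c : (∀ p q, K p q) × (∀ p q, L p q)) :
    (coneD dK δK dL δL f c).1 = totD dK δK c.1 := rfl

@[simp]
theorem coneD_snd (c : (∀ p q, K p q) × (∀ p q, L p q)) :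
    (coneD dK δK dL δL f c).2 = (fun p q => f p q (c.1 p q)) - totD dL δL c.2 := rfl

def ConeHasDegree (j n : ℕ) (c : (∀ p q, K p q) × (∀ p q, L p q)) : Prop :=
  HasTotalDegree j n c.1 ∧ HasTotalDegree (j + 1) n c.2

variable {dK δK dL δL f}

theorem IsDoubleComplexHom.totD_map (hf : IsDoubleComplexHom dK δK dL δL f)
    (g : ∀ p q, K p q) :
    totD dL δL (fun p q => f p q (g p q)) = fun p q => f p q (totD dK δK g p q) := by
  funext p q
  rcases p with _ | p <;> rcases q with _ | q <;> simp [totD, hf.comm_d, hf.comm_δ]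

theorem coneD_coneD (hK : IsDoubleComplex dK δK) (hL : IsDoubleComplex dL δL)
    (hf : IsDoubleComplexHom dK δK dL δL f) (c : (∀ p q, K p q) × (∀ p q, L p q)) :
    coneD dK δK dL δL f (coneD dK δK dL δL f c) = 0 := by
  ext1
  · exact hK.totD_totD c.1
  · rw [coneD_snd, coneD_fst, coneD_snd, totD_sub, hL.totD_totD, hf.totD_map, sub_zero, sub_self]
    rfl

namespace ConeHasDegree

variable {j n : ℕ} {c c' : (∀ p q, K p q) × (∀ p q, L p q)}

theorem add (hc : ConeHasDegree j n c) (hc' : ConeHasDegree j n c') :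
    ConeHasDegree j n (c + c') :=
  ⟨hc.1.add hc'.1, hc.2.add hc'.2⟩

theorem sub (hc : ConeHasDegree j n c) (hc' : ConeHasDegree j n c') :
    ConeHasDegree j n (c - c') :=
  ⟨hc.1.sub hc'.1, hc.2.sub hc'.2⟩

theorem coneD (hc : ConeHasDegree (j + 1) n c) :
    ConeHasDegree j n (DoubleComplexComparison.coneD dK δK dL δL f c) :=
  ⟨hc.1.totD dK δK, (hc.1.map f).sub (hc.2.totD dL δL)⟩

end ConeHasDegree

theorem exists_sub_coneD_vanishes_below_succ (hf : IsDoubleComplexHom dK δK dL δL f)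
    (hrows : ∀ p, IsQuasiIso (dK p) (dL p) (f p)) {n k : ℕ}
    {c : (∀ p q, K p q) × (∀ p q, L p q)} (hc : ConeHasDegree 0 n c)
    (hcc : coneD dK δK dL δL f c = 0) (hk : ∀ p < k, c.1 p = 0 ∧ c.2 p = 0) :
    ∃ c', ConeHasDegree 1 n c' ∧ ∀ p < k + 1,
      (c - coneD dK δK dL δL f c').1 p = 0 ∧ (c - coneD dK δK dL δL f c').2 p = 0 := by
  obtain ⟨y, x⟩ := c
  obtain ⟨hy, hx⟩ := hc
  have hprev : ∀ p', k = p' + 1 → y p' = 0 ∧ x p' = 0 := fun p' h => hk p' (by omega)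
  have hdy : ∀ q, rowD (dK k) (y k) q = 0 := fun q => by
    rw [← totD_apply_eq_rowD dK δK fun p' h => (hprev p' h).1]
    exact congrFun (congrFun (congrArg Prod.fst hcc) k) q
  have hfy : ∀ q, f k q (y k q) = rowD (dL k) (x k) q := fun q => by
    rw [← totD_apply_eq_rowD dL δL fun p' h => (hprev p' h).2]
    exact sub_eq_zero.mp (congrFun (congrFun (congrArg Prod.snd hcc) k) q)
  obtain ⟨w, z, hw, hz, hdw, hfw⟩ := (hrows k).cone_exact (hf.comm_d k) (m := n - k)
    (fun q h => hy k q (by omega)) (fun q h => hx k q (by omega)) hdy hfy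
  refine ⟨(Pi.single k w, Pi.single k z), ⟨hasTotalDegree_single hw, hasTotalDegree_single hz⟩,
    fun p hp => ?_⟩
  have hsingle : ∀ p', p = p' + 1 →
      (Pi.single k w : ∀ p q, K p q) p' = 0 ∧ (Pi.single k z : ∀ p q, L p q) p' = 0 :=
    fun p' h => by
      have hp' : p' ≠ k := by omega
      simp [hp']
  simp only [Prod.fst_sub, Prod.snd_sub, coneD_fst, coneD_snd, Pi.sub_apply,
    totD_apply_eq_rowD _ _ fun p' h => (hsingle p' h).1,
    totD_apply_eq_rowD _ _ fun p' h => (hsingle p' h).2]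
  by_cases hpk : p = k
  · subst hpk
    simp only [Pi.single_eq_same]
    constructor <;> funext q <;> simp [hdw, hfw]
  · obtain ⟨hyp, hxp⟩ : y p = 0 ∧ x p = 0 := hk p (by omega)
    constructor <;> funext q <;> simp [Pi.single_eq_of_ne hpk, hyp, hxp]

theorem exists_sub_coneD_vanishes_below (hK : IsDoubleComplex dK δK)
    (hL : IsDoubleComplex dL δL) (hf : IsDoubleComplexHom dK δK dL δL f)
    (hrows : ∀ p, IsQuasiIso (dK p) (dL p) (f p)) {n : ℕ}
    {c : (∀ p q, K p q) × (∀ p q, L p q)} (hc : ConeHasDegree 0 n c)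
    (hcc : coneD dK δK dL δL f c = 0) (k : ℕ) :
    ∃ c', ConeHasDegree 1 n c' ∧ ∀ p < k,
      (c - coneD dK δK dL δL f c').1 p = 0 ∧ (c - coneD dK δK dL δL f c').2 p = 0 := by
  induction k with
  | zero => exact ⟨0, ⟨fun _ _ _ => rfl, fun _ _ _ => rfl⟩, fun p hp => absurd hp p.not_lt_zero⟩
  | succ k ih =>
    obtain ⟨c', hc', hvanish⟩ := ih
    have hcocycle : coneD dK δK dL δL f (c - coneD dK δK dL δL f c') = 0 := by
      rw [map_sub, hcc, coneD_coneD hK hL hf, sub_zero]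
    obtain ⟨c'', hc'', hvanish'⟩ :=
      exists_sub_coneD_vanishes_below_succ hf hrows (hc.sub hc'.coneD) hcocycle hvanish
    exact ⟨c' + c'', hc'.add hc'', by rwa [map_add, ← sub_sub]⟩

theorem exists_coneD_eq_of_coneD_eq_zero (hK : IsDoubleComplex dK δK)
    (hL : IsDoubleComplex dL δL) (hf : IsDoubleComplexHom dK δK dL δL f)
    (hrows : ∀ p, IsQuasiIso (dK p) (dL p) (f p)) {n : ℕ}
    {c : (∀ p q, K p q) × (∀ p q, L p q)} (hc : ConeHasDegree 0 n c)
    (hcc : coneD dK δK dL δL f c = 0) :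
    ∃ c', ConeHasDegree 1 n c' ∧ coneD dK δK dL δL f c' = c := by
  obtain ⟨c', hc', hvanish⟩ := exists_sub_coneD_vanishes_below hK hL hf hrows hc hcc (n + 1)
  have hdeg : ConeHasDegree 0 n (c - coneD dK δK dL δL f c') := hc.sub hc'.coneD
  refine ⟨c', hc', (sub_eq_zero.mp (Prod.ext ?_ ?_)).symm⟩
  · exact hdeg.1.eq_zero_of_forall_lt_succ fun p hp => (hvanish p hp).1
  · exact hdeg.2.eq_zero_of_forall_lt_succ fun p hp => (hvanish p hp).2

end Cone

/-- **Theorem (comparison of double complexes).**  Let `f : K^{•,•} → L^{•,•}` be a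
morphism of first-quadrant double complexes of `R`-modules (with anti-commuting
differentials).  If for every `p ≥ 0` the induced morphism of row complexes
`f^{p,•} : K^{p,•} → L^{p,•}` induces an isomorphism in cohomology (stated below as
surjectivity and injectivity in each degree of each row), then the induced morphism of
total complexes `Tf : T_K^• → T_L^•` induces an isomorphism in cohomology (stated below as
surjectivity and injectivity in each degree `n`; elements of `T^n` are encoded as
functions `∀ p q, _` vanishing for `p + q ≠ n`). -/
theorem total_quasiIso_of_rows_quasiIso
    {K L : ℕ → ℕ → Type*}
    [∀ p q, AddCommGroup (K p q)] [∀ p q, Module R (K p q)]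
    [∀ p q, AddCommGroup (L p q)] [∀ p q, Module R (L p q)]
    (dK : ∀ p q, K p q →ₗ[R] K p (q + 1)) (δK : ∀ p q, K p q →ₗ[R] K (p + 1) q)
    (dL : ∀ p q, L p q →ₗ[R] L p (q + 1)) (δL : ∀ p q, L p q →ₗ[R] L (p + 1) q)
    (hddK : ∀ p q (x : K p q), dK p (q + 1) (dK p q x) = 0)
    (hδδK : ∀ p q (x : K p q), δK (p + 1) q (δK p q x) = 0)
    (hantiK : ∀ p q (x : K p q), dK (p + 1) q (δK p q x) + δK p (q + 1) (dK p q x) = 0)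
    (hddL : ∀ p q (x : L p q), dL p (q + 1) (dL p q x) = 0)
    (hδδL : ∀ p q (x : L p q), δL (p + 1) q (δL p q x) = 0)
    (hantiL : ∀ p q (x : L p q), dL (p + 1) q (δL p q x) + δL p (q + 1) (dL p q x) = 0)
    (f : ∀ p q, K p q →ₗ[R] L p q)
    (hfd : ∀ p q (x : K p q), f p (q + 1) (dK p q x) = dL p q (f p q x))
    (hfδ : ∀ p q (x : K p q), f (p + 1) q (δK p q x) = δL p q (f p q x))
    -- each row map `f^{p,•}` is surjective on cohomology …
    (hsurj0 : ∀ p (x : L p 0), dL p 0 x = 0 → ∃ y : K p 0, dK p 0 y = 0 ∧ f p 0 y = x)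
    (hsurj : ∀ p q (x : L p (q + 1)), dL p (q + 1) x = 0 →
      ∃ y : K p (q + 1), dK p (q + 1) y = 0 ∧ ∃ z : L p q, f p (q + 1) y = x + dL p q z)
    -- … and injective on cohomology
    (hinj0 : ∀ p (y : K p 0), dK p 0 y = 0 → f p 0 y = 0 → y = 0)
    (hinj : ∀ p q (y : K p (q + 1)), dK p (q + 1) y = 0 →
      (∃ z : L p q, f p (q + 1) y = dL p q z) → ∃ w : K p q, dK p q w = y) :
    -- then `Tf` is surjective on cohomology in every degree `n` …
    (∀ (n : ℕ) (x : ∀ p q, L p q), (∀ p q, p + q ≠ n → x p q = 0) →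
      (∀ p q, totD dL δL x p q = 0) →
      ∃ y : ∀ p q, K p q, (∀ p q, p + q ≠ n → y p q = 0) ∧
        (∀ p q, totD dK δK y p q = 0) ∧
        ∃ z : ∀ p q, L p q, (∀ p q, p + q + 1 ≠ n → z p q = 0) ∧
          ∀ p q, f p q (y p q) = x p q + totD dL δL z p q) ∧
    -- … and injective on cohomology in every degree `n`
    (∀ (n : ℕ) (y : ∀ p q, K p q), (∀ p q, p + q ≠ n → y p q = 0) →
      (∀ p q, totD dK δK y p q = 0) →
      (∃ z : ∀ p q, L p q, (∀ p q, p + q + 1 ≠ n → z p q = 0) ∧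
        ∀ p q, f p q (y p q) = totD dL δL z p q) →
      ∃ w : ∀ p q, K p q, (∀ p q, p + q + 1 ≠ n → w p q = 0) ∧
        ∀ p q, y p q = totD dK δK w p q) := by
  have hK : IsDoubleComplex dK δK := ⟨hddK, hδδK, hantiK⟩
  have hL : IsDoubleComplex dL δL := ⟨hddL, hδδL, hantiL⟩
  have hf : IsDoubleComplexHom dK δK dL δL f := ⟨hfd, hfδ⟩
  have hrows : ∀ p, IsQuasiIso (dK p) (dL p) (f p) :=
    fun p => ⟨hsurj0 p, hsurj p, hinj0 p, hinj p⟩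
  constructor
  · intro n x hx hxc
    have hcc : coneD dK δK dL δL f (0, x) = 0 := by
      ext1
      · exact totD_zero dK δK
      · rw [coneD_snd, show totD dL δL x = 0 from funext fun p => funext (hxc p)]
        funext p q
        simp
    have hdeg : ConeHasDegree 0 (n + 1) ((0 : ∀ p q, K p q), x) := 
      ⟨fun _ _ _ => rfl, HasTotalDegree.succ_succ hx⟩
    obtain ⟨⟨w, t⟩, ⟨hw, ht⟩, hwt⟩ := exists_coneD_eq_of_coneD_eq_zero hK hL hf hrows hdeg hcc
    obtain ⟨hdw, hfw⟩ := Prod.ext_iff.mp hwt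
    exact ⟨w, hw.of_succ_succ, fun p q => congrFun (congrFun hdw p) q, t, ht.of_succ_succ,
      fun p q => eq_add_of_sub_eq (congrFun (congrFun hfw p) q)⟩
  · rintro n y hy hyc ⟨z, hz, hfz⟩
    have hcc : coneD dK δK dL δL f (y, z) = 0 := by
      ext1
      · exact funext fun p => funext (hyc p)
      · funext p q
        exact sub_eq_zero.mpr (hfz p q)
    have hdeg : ConeHasDegree 0 n (y, z) := ⟨hy, hz⟩
    obtain ⟨⟨w, _⟩, ⟨hw, -⟩, hwt⟩ := exists_coneD_eq_of_coneD_eq_zero hK hL hf hrows hdeg hcc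
    exact ⟨w, hw, fun p q => (congrFun (congrFun (congrArg Prod.fst hwt) p) q).symm⟩

end DoubleComplexComparison
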